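/- arXiv:2305.11492 — 3 statements merged into one kernel-verified Lean document; each statement's English description precedes it below -/
import Mathlib

section
/- For Re(β) > Re(α) > 0, the regularized confluent hypergeometric function defined by ₁f₁(α, β; z) := (Γ(α)Γ(β−α)/Γ(β)) · ₁F₁(α, β; z) has the integral representation ₁f₁(α, β; z) = ∫₀¹ e^{zu} u^{α−1} (1−u)^{β−α−1} du. -/
open Complex

/-- Kummer's confluent hypergeometric function `₁F₁(α, β; z)`. -/
noncomputable def kummer1F1 (α β z : ℂ) : ℂ :=
  ∑' n : ℕ, ((ascPochhammer ℂ n).eval α / (ascPochhammer ℂ n).eval β) * z ^ n / n.factorial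

/-- The regularized function `₁f₁(α, β; z) = (Γ(α)Γ(β−α)/Γ(β)) ₁F₁(α, β; z)`. -/
noncomputable def kummer1f1 (α β z : ℂ) : ℂ :=
  Complex.Gamma α * Complex.Gamma (β - α) / Complex.Gamma β * kummer1F1 α β z

/-!
Expand `e^{zu}` in its power series and integrate term by term, which is legitimate because the
`n`-th term is dominated by `‖z‖ⁿ/n!` times the integrable Beta kernel. The `n`-th integral is
`B(α + n, β − α) = Γ(α + n)Γ(β − α)/Γ(β + n)`, and `Γ(s + n) = Γ(s) (s)ₙ` turns this into
`Γ(α)Γ(β − α)/Γ(β) · (α)ₙ/(β)ₙ`.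
-/

open MeasureTheory Set

namespace Complex

lemma ne_neg_natCast_of_re_pos {s : ℂ} (hs : 0 < s.re) (k : ℕ) : s ≠ -k := by
  rintro rfl
  simp only [neg_re, natCast_re, Left.neg_pos_iff] at hs
  linarith [k.cast_nonneg (α := ℝ)]

lemma Gamma_add_nat_eq_Gamma_mul_ascPochhammer {s : ℂ} (hs : ∀ k : ℕ, s ≠ -k) (n : ℕ) :
    Gamma (s + n) = Gamma s * (ascPochhammer ℂ n).eval s := by
  rw [← Gamma_add_nat_div_Gamma_eq s hs, mul_div_cancel₀ _ (Gamma_ne_zero hs)]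

lemma betaIntegral_add_nat {a b : ℂ} (ha : 0 < a.re) (hb : 0 < b.re) (n : ℕ) :
    betaIntegral (a + n) b =
      Gamma a * Gamma b / Gamma (a + b) *
        ((ascPochhammer ℂ n).eval a / (ascPochhammer ℂ n).eval (a + b)) := by
  have hab : 0 < (a + b).re := by rw [add_re]; positivity
  have han : 0 < (a + n).re := by simp only [add_re, natCast_re]; positivity
  have hΓa := Gamma_add_nat_eq_Gamma_mul_ascPochhammer (ne_neg_natCast_of_re_pos ha) n
  have hΓab := Gamma_add_nat_eq_Gamma_mul_ascPochhammer (ne_neg_natCast_of_re_pos hab) n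
  have hΓabn : Gamma (a + b + n) ≠ 0 := Gamma_ne_zero_of_re_pos (by
    simp only [add_re, natCast_re] at hab ⊢; positivity)
  have hpoch : (ascPochhammer ℂ n).eval (a + b) ≠ 0 := by
    rintro h
    simp [hΓab, h] at hΓabn
  have hbeta := Gamma_mul_Gamma_eq_betaIntegral han hb
  rw [add_right_comm, hΓab, hΓa] at hbeta
  rw [div_mul_div_comm, eq_div_iff (mul_ne_zero (Gamma_ne_zero_of_re_pos hab) hpoch)]
  linear_combination -hbeta

lemma integrableOn_Ioo_betaIntegrand {a b : ℂ} (ha : 0 < a.re) (hb : 0 < b.re) :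
    IntegrableOn (fun u : ℝ => (u : ℂ) ^ (a - 1) * (1 - (u : ℂ)) ^ (b - 1)) (Ioo 0 1) :=
  ((intervalIntegrable_iff_integrableOn_Ioc_of_le zero_le_one).mp
    (betaIntegral_convergent ha hb)).mono_set Ioo_subset_Ioc_self

lemma setIntegral_Ioo_pow_mul_betaIntegrand (a b : ℂ) (n : ℕ) :
    ∫ u in Ioo (0 : ℝ) 1, (u : ℂ) ^ n * ((u : ℂ) ^ (a - 1) * (1 - (u : ℂ)) ^ (b - 1)) =
      betaIntegral (a + n) b := by
  rw [betaIntegral, intervalIntegral.integral_of_le zero_le_one, integral_Ioc_eq_integral_Ioo]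
  refine setIntegral_congr_fun measurableSet_Ioo fun u hu => ?_
  have hu0 : (u : ℂ) ≠ 0 := ofReal_ne_zero.mpr hu.1.ne'
  rw [show a + n - 1 = a - 1 + n by ring, cpow_add _ _ hu0, cpow_natCast]
  ring

end Complex

lemma integral_exp_mul_mul_eq_tsum {X : Type*} [MeasurableSpace X] {μ : Measure X}
    {f g : X → ℂ} (hf : AEStronglyMeasurable f μ) (hf_le : ∀ᵐ x ∂μ, ‖f x‖ ≤ 1)
    (hg : Integrable g μ) (z : ℂ) :
    ∫ x, exp (z * f x) * g x ∂μ = ∑' n : ℕ, z ^ n / n.factorial * ∫ x, f x ^ n * g x ∂μ := by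
  set F : ℕ → X → ℂ := fun n x => z ^ n / n.factorial * (f x ^ n * g x)
  have hF_int (n : ℕ) : Integrable (F n) μ :=
    (hg.bdd_mul (c := 1) (hf.pow n) (hf_le.mono fun x hx => by
      simpa using pow_le_one₀ (norm_nonneg _) hx)).const_mul _
  have hF_le (n : ℕ) : ∀ᵐ x ∂μ, ‖F n x‖ ≤ ‖z‖ ^ n / n.factorial * ‖g x‖ := by
    filter_upwards [hf_le] with x hx
    simp only [F, norm_mul, norm_div, norm_pow, Complex.norm_natCast]
    gcongr
    exact mul_le_of_le_one_left (norm_nonneg _) (pow_le_one₀ (norm_nonneg _) hx)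
  have hF_summable : Summable fun n => ∫ x, ‖F n x‖ ∂μ := by
    refine .of_nonneg_of_le (fun n => integral_nonneg fun _ => norm_nonneg _) (fun n => ?_)
      ((Real.summable_pow_div_factorial ‖z‖).mul_right (∫ x, ‖g x‖ ∂μ))
    rw [← integral_const_mul]
    exact integral_mono_ae (hF_int n).norm (hg.norm.const_mul _) (hF_le n)
  have hF_sum (x : X) : exp (z * f x) * g x = ∑' n, F n x := by
    have hexp : HasSum (fun n : ℕ => (z * f x) ^ n / n.factorial) (exp (z * f x)) := by
      rw [exp_eq_exp_ℂ]
      exact NormedSpace.expSeries_div_hasSum_exp (z * f x)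
    rw [← (hexp.mul_right (g x)).tsum_eq]
    exact tsum_congr fun n => by simp only [F, mul_pow]; ring
  simp_rw [hF_sum, ← integral_tsum_of_summable_integral_norm hF_int hF_summable, F,
    integral_const_mul]

/-- For `Re(β) > Re(α) > 0`, one has
`₁f₁(α, β; z) = ∫₀¹ e^{zu} u^{α−1} (1−u)^{β−α−1} du`. -/
theorem kummer1f1_eq_integral (α β z : ℂ) (hα : 0 < α.re) (hβ : α.re < β.re) :
    kummer1f1 α β z =
      ∫ u in Set.Ioo (0 : ℝ) 1,
        Complex.exp (z * u) * (u : ℂ) ^ (α - 1) * ((1 : ℂ) - u) ^ (β - α - 1) := by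
  have hβα : 0 < (β - α).re := by rw [sub_re]; linarith
  have hu_le : ∀ᵐ u : ℝ ∂(volume.restrict (Ioo 0 1)), ‖(u : ℂ)‖ ≤ 1 :=
    ae_restrict_of_forall_mem measurableSet_Ioo fun u hu => by
      rw [norm_real, Real.norm_of_nonneg hu.1.le]; exact hu.2.le
  simp_rw [mul_assoc]
  rw [integral_exp_mul_mul_eq_tsum continuous_ofReal.aestronglyMeasurable hu_le
    (integrableOn_Ioo_betaIntegrand hα hβα), kummer1f1, kummer1F1, ← tsum_mul_left]
  refine tsum_congr fun n => ?_
  rw [setIntegral_Ioo_pow_mul_betaIntegrand, betaIntegral_add_nat hα hβα, add_sub_cancel]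
  ring
end

section
/- Let n be a nonnegative integer, α, β complex with Re(β) > Re(α) > 0, and z ∈ ℂ. Then the n-th derivative with respect to α of ₁f₁(α, β; z) equals ∫₀¹ e^{zu} (Σ_{j=0}^n (−1)^{n−j} C(n,j) (log u)^j (log(1−u))^{n−j}) u^{α−1}(1−u)^{β−α−1} du. -/
/-!
Differentiating `u ^ (s - 1) * (1 - u) ^ (β - s - 1)` in `s` multiplies it by
`log u - log (1 - u)`, so the `n`-th derivative of the integral is the integral of the integrand
times `(log u - log (1 - u)) ^ n`, whose binomial expansion is the stated sum. Differentiation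
under the integral sign is justified by `|log x| ≤ x ^ (-δ) / δ` on `(0, 1]`: on a strip
`0 < a ≤ Re s ≤ c < Re β` the `m`-th differentiated integrand is dominated by a multiple of the
Beta integrand `u ^ (a - mδ - 1) * (1 - u) ^ (Re β - c - mδ - 1)`, which is integrable once
`mδ < min a (Re β - c)`.
-/

open Complex

/-- The integral `₁f₁(α, β; z) = ∫₀¹ e^{zu} u^{α−1} (1−u)^{β−α−1} du`
(valid representation of the regularized Kummer function for `Re β > Re α > 0`). -/
noncomputable def kummer1f1Int (α β z : ℂ) : ℂ :=
  ∫ u in Set.Ioo (0 : ℝ) 1,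
    Complex.exp (z * u) * (u : ℂ) ^ (α - 1) * ((1 : ℂ) - u) ^ (β - α - 1)

open MeasureTheory Metric Set

theorem sub_pow_eq_sum_neg_one_pow {R : Type*} [CommRing R] (x y : R) (n : ℕ) :
    (x - y) ^ n =
      ∑ j ∈ Finset.range (n + 1), (-1) ^ (n - j) * (n.choose j) * x ^ j * y ^ (n - j) := by
  rw [sub_pow]
  refine Finset.sum_congr rfl fun j hj => ?_
  have hparity : (-1 : R) ^ (j + n) = (-1) ^ (n - j) := by
    rw [show j + n = (n - j) + 2 * j by grind, pow_add, pow_mul, neg_one_sq, one_pow, mul_one]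
  rw [hparity]
  ring

theorem Real.abs_log_le_rpow_neg_div {x δ : ℝ} (hx₀ : 0 < x) (hx₁ : x ≤ 1) (hδ : 0 < δ) :
    |Real.log x| ≤ x ^ (-δ) / δ := by
  have h := Real.log_le_rpow_div (inv_pos.2 hx₀).le hδ
  rwa [Real.log_inv, Real.inv_rpow hx₀.le, ← Real.rpow_neg hx₀.le,
    ← abs_of_nonpos (Real.log_nonpos hx₀.le hx₁)] at h

theorem integrableOn_rpow_mul_one_sub_rpow {p q : ℝ} (hp : 0 < p) (hq : 0 < q) :
    IntegrableOn (fun u : ℝ => u ^ (p - 1) * (1 - u) ^ (q - 1)) (Ioo 0 1) := by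
  have h := Complex.betaIntegral_convergent (u := p) (v := q) (by simpa) (by simpa)
  rw [intervalIntegrable_iff_integrableOn_Ioc_of_le zero_le_one] at h
  refine IntegrableOn.congr_fun (h.mono_set Ioo_subset_Ioc_self).norm
    (fun u ⟨hu₀, hu₁⟩ => ?_) measurableSet_Ioo
  rw [norm_mul, show (1 : ℂ) - u = ((1 - u : ℝ) : ℂ) by push_cast; rfl,
    norm_cpow_eq_rpow_re_of_pos hu₀, norm_cpow_eq_rpow_re_of_pos (sub_pos.2 hu₁)]
  simp

namespace Kummer1f1

noncomputable def logRatio (u : ℝ) : ℂ :=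
  (Real.log u : ℂ) - (Real.log (1 - u) : ℂ)

/-- The integrand of the `m`-th parameter derivative of `s ↦ kummer1f1Int s β z`. -/
noncomputable def integrand (β z : ℂ) (m : ℕ) (s : ℂ) (u : ℝ) : ℂ :=
  exp (z * u) * (u : ℂ) ^ (s - 1) * ((1 : ℂ) - u) ^ (β - s - 1) * logRatio u ^ m

theorem norm_logRatio_le {u δ : ℝ} (hu : u ∈ Ioo (0 : ℝ) 1) (hδ : 0 < δ) :
    ‖logRatio u‖ ≤ 2 / δ * (u ^ (-δ) * (1 - u) ^ (-δ)) := by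
  obtain ⟨hu₀, hu₁⟩ := hu
  have h1u : 0 < 1 - u := sub_pos.2 hu₁
  have hx : 1 ≤ u ^ (-δ) :=
    Real.one_le_rpow_of_pos_of_le_one_of_nonpos hu₀ hu₁.le (by linarith)
  have hy : 1 ≤ (1 - u) ^ (-δ) :=
    Real.one_le_rpow_of_pos_of_le_one_of_nonpos h1u (by linarith) (by linarith)
  have hlog₁ := Real.abs_log_le_rpow_neg_div hu₀ hu₁.le hδ
  have hlog₂ := Real.abs_log_le_rpow_neg_div h1u (by linarith) hδ
  rw [logRatio, ← ofReal_sub, norm_real, Real.norm_eq_abs]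
  calc |Real.log u - Real.log (1 - u)|
      ≤ |Real.log u| + |Real.log (1 - u)| := abs_sub _ _
    _ ≤ u ^ (-δ) * (1 - u) ^ (-δ) / δ + u ^ (-δ) * (1 - u) ^ (-δ) / δ := by
        gcongr
        · exact hlog₁.trans (by gcongr; exact le_mul_of_one_le_right (by positivity) hy)
        · exact hlog₂.trans (by gcongr; exact le_mul_of_one_le_left (by positivity) hx)
    _ = 2 / δ * (u ^ (-δ) * (1 - u) ^ (-δ)) := by ring

theorem norm_integrand_le (β z : ℂ) (m : ℕ) {a c δ : ℝ} (hδ : 0 < δ) {s : ℂ}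
    (has : a ≤ s.re) (hsc : s.re ≤ c) {u : ℝ} (hu : u ∈ Ioo (0 : ℝ) 1) :
    ‖integrand β z m s u‖ ≤ Real.exp ‖z‖ * (2 / δ) ^ m *
      (u ^ (a - m * δ - 1) * (1 - u) ^ (β.re - c - m * δ - 1)) := by
  obtain ⟨hu₀, hu₁⟩ := hu
  have h1u : 0 < 1 - u := sub_pos.2 hu₁
  have hexp : ‖exp (z * u)‖ ≤ Real.exp ‖z‖ := by
    refine (norm_exp_le_exp_norm _).trans (Real.exp_le_exp.2 ?_)
    rw [norm_mul, norm_real, Real.norm_of_nonneg hu₀.le]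
    exact mul_le_of_le_one_right (norm_nonneg z) hu₁.le
  have hleft : ‖(u : ℂ) ^ (s - 1)‖ ≤ u ^ (a - 1) := by
    rw [norm_cpow_eq_rpow_re_of_pos hu₀]
    exact Real.rpow_le_rpow_of_exponent_ge hu₀ hu₁.le (by simpa using has)
  have hright : ‖((1 : ℂ) - u) ^ (β - s - 1)‖ ≤ (1 - u) ^ (β.re - c - 1) := by
    rw [← ofReal_one, ← ofReal_sub, norm_cpow_eq_rpow_re_of_pos h1u]
    exact Real.rpow_le_rpow_of_exponent_ge h1u (by linarith) (by simp; linarith)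
  have hlog : ‖logRatio u ^ m‖ ≤ (2 / δ * (u ^ (-δ) * (1 - u) ^ (-δ))) ^ m := by
    rw [norm_pow]
    exact pow_le_pow_left₀ (norm_nonneg _) (norm_logRatio_le ⟨hu₀, hu₁⟩ hδ) m
  have hsplit : ∀ {x : ℝ}, 0 < x → ∀ c : ℝ, x ^ (c - m * δ - 1) = x ^ (c - 1) * (x ^ (-δ)) ^ m :=
    fun hx c => by rw [← Real.rpow_mul_natCast hx.le, ← Real.rpow_add hx]; ring_nf
  calc ‖integrand β z m s u‖
      = ‖exp (z * u)‖ * ‖(u : ℂ) ^ (s - 1)‖ * ‖((1 : ℂ) - u) ^ (β - s - 1)‖ *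
          ‖logRatio u ^ m‖ := by simp only [integrand, norm_mul]
    _ ≤ Real.exp ‖z‖ * u ^ (a - 1) * (1 - u) ^ (β.re - c - 1) *
          (2 / δ * (u ^ (-δ) * (1 - u) ^ (-δ))) ^ m := by
        gcongr
    _ = Real.exp ‖z‖ * (2 / δ) ^ m *
          (u ^ (a - m * δ - 1) * (1 - u) ^ (β.re - c - m * δ - 1)) := by
        rw [hsplit hu₀, hsplit h1u]
        ring

theorem exists_integrableOn_bound (β z : ℂ) (m : ℕ) {a c : ℝ} (ha : 0 < a) (hc : c < β.re) :
    ∃ g : ℝ → ℝ, IntegrableOn g (Ioo 0 1) ∧ ∀ s : ℂ, a ≤ s.re → s.re ≤ c →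
      ∀ u ∈ Ioo (0 : ℝ) 1, ‖integrand β z m s u‖ ≤ g u := by
  have hmin : 0 < min a (β.re - c) := lt_min ha (sub_pos.2 hc)
  set δ := min a (β.re - c) / (m + 1)
  have hδ : 0 < δ := by positivity
  have hmδ : m * δ < min a (β.re - c) := by
    rw [mul_div_assoc', div_lt_iff₀ (by positivity)]
    nlinarith
  have hp : 0 < a - m * δ := by linarith [min_le_left a (β.re - c)]
  have hq : 0 < β.re - c - m * δ := by linarith [min_le_right a (β.re - c)]
  exact ⟨_, (integrableOn_rpow_mul_one_sub_rpow hp hq).const_mul _,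
    fun s has hsc u hu => norm_integrand_le β z m hδ has hsc hu⟩

theorem continuousOn_integrand (β z : ℂ) (m : ℕ) (s : ℂ) :
    ContinuousOn (integrand β z m s) (Ioo 0 1) := by
  intro u ⟨hu₀, hu₁⟩
  have h1u : (1 : ℂ) - u ∈ slitPlane := by
    rw [show (1 : ℂ) - u = ((1 - u : ℝ) : ℂ) by push_cast; rfl]
    exact ofReal_mem_slitPlane.2 (sub_pos.2 hu₁)
  have hlog : ContinuousAt (fun x : ℝ => Real.log x) u := Real.continuousAt_log hu₀.ne'
  have hlog' : ContinuousAt (fun x : ℝ => Real.log (1 - x)) u :=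
    (Real.continuousAt_log (sub_pos.2 hu₁).ne').comp (by fun_prop)
  unfold integrand logRatio
  refine ContinuousAt.continuousWithinAt ?_
  fun_prop (disch := first | exact ofReal_mem_slitPlane.2 hu₀ | exact h1u)

theorem integrableOn_integrand (β z : ℂ) (m : ℕ) {s : ℂ} (hs₀ : 0 < s.re) (hsβ : s.re < β.re) :
    IntegrableOn (integrand β z m s) (Ioo 0 1) := by
  obtain ⟨g, hg, hbound⟩ := exists_integrableOn_bound β z m hs₀ hsβ
  refine hg.mono' ((continuousOn_integrand β z m s).aestronglyMeasurable measurableSet_Ioo) ?_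
  filter_upwards [ae_restrict_mem measurableSet_Ioo] with u hu
  exact hbound s le_rfl le_rfl u hu

theorem hasDerivAt_integrand (β z : ℂ) (m : ℕ) (s : ℂ) {u : ℝ} (hu : u ∈ Ioo (0 : ℝ) 1) :
    HasDerivAt (fun t => integrand β z m t u) (integrand β z (m + 1) s u) s := by
  obtain ⟨hu₀, hu₁⟩ := hu
  have h1u : (1 : ℂ) - u = ((1 - u : ℝ) : ℂ) := by push_cast; rfl
  have hleft := ((hasDerivAt_id s).sub_const 1).const_cpow (c := (u : ℂ))
    (Or.inl (ofReal_ne_zero.2 hu₀.ne'))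
  have hright := (((hasDerivAt_id s).const_sub β).sub_const 1).const_cpow (c := (1 : ℂ) - u)
    (Or.inl (by rw [h1u]; exact ofReal_ne_zero.2 (sub_pos.2 hu₁).ne'))
  refine (((hleft.const_mul (exp (z * u))).mul hright).mul_const (logRatio u ^ m)).congr_deriv ?_
  rw [integrand, logRatio, pow_succ, ofReal_log hu₀.le, ofReal_log (sub_pos.2 hu₁).le, ← h1u]
  simp only [id]
  ring

theorem hasDerivAt_integral_integrand (β z : ℂ) (m : ℕ) {s : ℂ} (hs₀ : 0 < s.re)
    (hsβ : s.re < β.re) :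
    HasDerivAt (fun t => ∫ u in Ioo (0 : ℝ) 1, integrand β z m t u)
      (∫ u in Ioo (0 : ℝ) 1, integrand β z (m + 1) s u) s := by
  obtain ⟨ε, hε, hεs, hεβ⟩ : ∃ ε, 0 < ε ∧ ε < s.re ∧ ε < β.re - s.re := by
    simpa only [lt_min_iff] using exists_between (lt_min hs₀ (sub_pos.2 hsβ))
  have hball : ∀ t ∈ ball s ε, s.re - ε ≤ t.re ∧ t.re ≤ s.re + ε := by
    intro t ht
    have h := (abs_re_le_norm (t - s)).trans (mem_ball_iff_norm.1 ht).le
    rw [sub_re, abs_le] at h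
    constructor <;> linarith [h.1, h.2]
  obtain ⟨g, hg, hbound⟩ :=
    exists_integrableOn_bound β z (m + 1) (sub_pos.2 hεs) (lt_sub_iff_add_lt'.1 hεβ)
  refine (hasDerivAt_integral_of_dominated_loc_of_deriv_le (ball_mem_nhds s hε)
    (Filter.Eventually.of_forall fun t =>
      (continuousOn_integrand β z m t).aestronglyMeasurable measurableSet_Ioo)
    (integrableOn_integrand β z m hs₀ hsβ)
    ((continuousOn_integrand β z (m + 1) s).aestronglyMeasurable measurableSet_Ioo)
    ?_ hg ?_).2
  · filter_upwards [ae_restrict_mem measurableSet_Ioo] with u hu t ht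
    exact hbound t (hball t ht).1 (hball t ht).2 u hu
  · filter_upwards [ae_restrict_mem measurableSet_Ioo] with u hu t _
    exact hasDerivAt_integrand β z m t hu

theorem iteratedDeriv_integral_integrand (β z : ℂ) (n : ℕ) {s : ℂ} (hs₀ : 0 < s.re)
    (hsβ : s.re < β.re) :
    iteratedDeriv n (fun t => ∫ u in Ioo (0 : ℝ) 1, integrand β z 0 t u) s =
      ∫ u in Ioo (0 : ℝ) 1, integrand β z n s u := by
  induction n generalizing s with
  | zero => rw [iteratedDeriv_zero]
  | succ n ih =>
    have hstrip : re ⁻¹' Ioo 0 β.re ∈ nhds s :=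
      (isOpen_Ioo.preimage continuous_re).mem_nhds ⟨hs₀, hsβ⟩
    have heq : iteratedDeriv n (fun t => ∫ u in Ioo (0 : ℝ) 1, integrand β z 0 t u)
        =ᶠ[nhds s] fun t => ∫ u in Ioo (0 : ℝ) 1, integrand β z n t u := by
      filter_upwards [hstrip] with t ht using ih ht.1 ht.2
    rw [iteratedDeriv_succ, heq.deriv_eq]
    exact (hasDerivAt_integral_integrand β z n hs₀ hsβ).deriv

end Kummer1f1

/-- For `Re(β) > Re(α) > 0`, the `n`-th derivative of `s ↦ ₁f₁(s, β; z)`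
(where both exponents `s−1` and `β−s−1` vary with `s`) at `s = α` equals
`∫₀¹ e^{zu} (Σ_{j=0}^n (−1)^{n−j} C(n,j) (log u)^j (log(1−u))^{n−j})
  u^{α−1}(1−u)^{β−α−1} du`. -/
theorem iteratedDeriv_kummer1f1Int (n : ℕ) (α β z : ℂ) (hα : 0 < α.re) (hβ : α.re < β.re) :
    iteratedDeriv n (fun s => kummer1f1Int s β z) α =
      ∫ u in Set.Ioo (0 : ℝ) 1,
        Complex.exp (z * u) *
          (∑ j ∈ Finset.range (n + 1),
            (-1 : ℂ) ^ (n - j) * (n.choose j) * (Real.log u : ℂ) ^ j *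
              (Real.log (1 - u) : ℂ) ^ (n - j)) *
          (u : ℂ) ^ (α - 1) * ((1 : ℂ) - u) ^ (β - α - 1) := by
  have hkummer : (fun s => kummer1f1Int s β z) =
      fun s => ∫ u in Ioo (0 : ℝ) 1, Kummer1f1.integrand β z 0 s u := by
    simp only [kummer1f1Int, Kummer1f1.integrand, pow_zero, mul_one]
  rw [hkummer, Kummer1f1.iteratedDeriv_integral_integrand β z n hα hβ]
  congr 1 with u
  rw [Kummer1f1.integrand, Kummer1f1.logRatio, sub_pow_eq_sum_neg_one_pow]
  ring
end

section
/- Fix t₀ ∈ ℝ and ε ∈ (0, 1/2). For s = k/2 − δ + it₀ with ε < δ < 1/2, one has |Γ(s)/Γ(k−s)| = |k/2 + it₀|^{−2δ} · |1 + O(1/|k/2 + it₀|)| as k → ∞, where the implied constant is absolute and uniform in δ ∈ (ε, 1/2). In particular |Γ(s)/Γ(k−s)| → 0 as k → ∞, uniformly in δ. -/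
/-!
Write `x = k/2` and `r = ‖x + it‖`, so `x ≤ r ≤ x + |t|`. For `x > 1/2` the product formula for
`Γ` gives `e^{-t²/(2x-1)} Γ(x) ≤ ‖Γ(x + it)‖ ≤ Γ(x)`: the factor `‖x + j + it‖ / (x + j)` lies
between `1` and `exp (t² / (2(x+j)²))`, and these exponents sum to at most `t² / (2x - 1)`.
Log-convexity of `Γ` (Wendel's inequality) traps `Γ(x - δ) / Γ(x + δ)` between `(x - δ)^{-2δ}`
and `(x + δ - 1)^{-2δ}`. Together, `‖Γ(x - δ + it) / Γ(x + δ - it)‖ · r^{2δ} = 1 + O(1/x)`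
uniformly in `δ ∈ (0, 1/2)`, and then the ratio is at most `(1 + C) x^{-2ε} → 0` for `δ ≥ ε`.
-/

open Complex Finset Filter Topology

/-- `1/y² ≤ 2/(2y-1) - 2/(2y+1)`, so the sum telescopes. -/
theorem sum_range_one_div_add_sq_le {x : ℝ} (hx : 1 / 2 < x) (n : ℕ) :
    ∑ j ∈ range n, 1 / (x + j) ^ 2 ≤ 2 / (2 * x - 1) := by
  suffices h : ∑ j ∈ range n, 1 / (x + j) ^ 2 ≤ 2 / (2 * x - 1) - 2 / (2 * (x + n) - 1) by
    have : 0 ≤ 2 / (2 * (x + n) - 1) :=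
      div_nonneg zero_le_two (by linarith [n.cast_nonneg (α := ℝ)])
    linarith
  induction n with
  | zero => simp
  | succ n ih =>
    have hy : 1 / 2 < x + n := by linarith [n.cast_nonneg (α := ℝ)]
    have hterm : 1 / (x + n) ^ 2 ≤ 2 / (2 * (x + n) - 1) - 2 / (2 * (x + n) + 1) := by
      rw [div_sub_div _ _ (by linarith) (by linarith),
        div_le_div_iff₀ (by positivity) (by nlinarith)]
      nlinarith
    rw [sum_range_succ, Nat.cast_succ, show 2 * (x + (n + 1)) - 1 = 2 * (x + n) + 1 by ring]
    linarith

namespace Complex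

theorem norm_ofReal_add_mul_I_le {y : ℝ} (hy : 0 < y) (t : ℝ) :
    ‖(y : ℂ) + t * I‖ ≤ y * Real.exp (t ^ 2 / (2 * y ^ 2)) := by
  have hsq : (y * Real.exp (t ^ 2 / (2 * y ^ 2))) ^ 2 = y ^ 2 * Real.exp (t ^ 2 / y ^ 2) := by
    rw [mul_pow, sq (Real.exp _), ← Real.exp_add]
    ring_nf
  rw [norm_add_mul_I, Real.sqrt_le_left (by positivity), hsq]
  calc y ^ 2 + t ^ 2 = y ^ 2 * (t ^ 2 / y ^ 2 + 1) := by field_simp; ring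
    _ ≤ y ^ 2 * Real.exp (t ^ 2 / y ^ 2) := by gcongr; exact Real.add_one_le_exp _

theorem le_norm_ofReal_add_mul_I (x t : ℝ) : x ≤ ‖(x : ℂ) + t * I‖ := by
  simpa using re_le_norm ((x : ℂ) + t * I)

theorem norm_GammaSeq (s : ℂ) {n : ℕ} (hn : n ≠ 0) :
    ‖GammaSeq s n‖ = n ^ s.re * n.factorial / ∏ j ∈ range (n + 1), ‖s + j‖ := by
  rw [GammaSeq, norm_div, norm_mul, norm_prod, norm_natCast_cpow_of_pos (Nat.pos_of_ne_zero hn),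
    norm_natCast]

theorem prod_le_prod_norm_add_mul_I_add {x : ℝ} (hx : 0 ≤ x) (t : ℝ) (n : ℕ) :
    ∏ j ∈ range n, (x + j) ≤ ∏ j ∈ range n, ‖(x : ℂ) + t * I + j‖ :=
  prod_le_prod (fun j _ => by positivity) fun j _ => by
    simpa using re_le_norm ((x : ℂ) + t * I + j)

theorem prod_norm_add_mul_I_add_le {x : ℝ} (hx : 1 / 2 < x) (t : ℝ) (n : ℕ) :
    ∏ j ∈ range n, ‖(x : ℂ) + t * I + j‖ ≤
      Real.exp (t ^ 2 / (2 * x - 1)) * ∏ j ∈ range n, (x + j) := by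
  have hfactor : ∀ j : ℕ, ‖(x : ℂ) + t * I + j‖ ≤ (x + j) * Real.exp (t ^ 2 / (2 * (x + j) ^ 2)) :=
    fun j => by
      rw [show (x : ℂ) + t * I + j = ((x + j : ℝ) : ℂ) + t * I by push_cast; ring]
      exact norm_ofReal_add_mul_I_le (by positivity) t
  have hsum : ∑ j ∈ range n, t ^ 2 / (2 * (x + j) ^ 2) ≤ t ^ 2 / (2 * x - 1) := by
    calc ∑ j ∈ range n, t ^ 2 / (2 * (x + j) ^ 2)
        = t ^ 2 / 2 * ∑ j ∈ range n, 1 / (x + j) ^ 2 := by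
          rw [mul_sum]; congr 1 with j; field_simp
      _ ≤ t ^ 2 / 2 * (2 / (2 * x - 1)) := by
          gcongr; exact sum_range_one_div_add_sq_le hx n
      _ = t ^ 2 / (2 * x - 1) := by field_simp
  calc ∏ j ∈ range n, ‖(x : ℂ) + t * I + j‖
      ≤ ∏ j ∈ range n, (x + j) * Real.exp (t ^ 2 / (2 * (x + j) ^ 2)) :=
        prod_le_prod (fun _ _ => norm_nonneg _) fun j _ => hfactor j
    _ = Real.exp (∑ j ∈ range n, t ^ 2 / (2 * (x + j) ^ 2)) * ∏ j ∈ range n, (x + j) := by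
        rw [prod_mul_distrib, Real.exp_sum, mul_comm]
    _ ≤ Real.exp (t ^ 2 / (2 * x - 1)) * ∏ j ∈ range n, (x + j) := by
        gcongr

theorem norm_GammaSeq_le {x : ℝ} (hx : 0 < x) (t : ℝ) {n : ℕ} (hn : n ≠ 0) :
    ‖GammaSeq (x + t * I) n‖ ≤ Real.GammaSeq x n := by
  rw [norm_GammaSeq _ hn, Real.GammaSeq, show ((x : ℂ) + t * I).re = x by simp]
  exact div_le_div_of_nonneg_left (by positivity) (prod_pos fun j _ => by positivity)
    (prod_le_prod_norm_add_mul_I_add hx.le t _)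

theorem exp_mul_GammaSeq_le_norm_GammaSeq {x : ℝ} (hx : 1 / 2 < x) (t : ℝ) {n : ℕ} (hn : n ≠ 0) :
    Real.exp (-(t ^ 2 / (2 * x - 1))) * Real.GammaSeq x n ≤ ‖GammaSeq (x + t * I) n‖ := by
  rw [norm_GammaSeq _ hn, Real.GammaSeq, show ((x : ℂ) + t * I).re = x by simp, Real.exp_neg,
    ← div_eq_inv_mul, div_div]
  have hprod : 0 < ∏ j ∈ range (n + 1), (x + j) := prod_pos fun j _ => by positivity
  refine div_le_div_of_nonneg_left (by positivity)
    (hprod.trans_le (prod_le_prod_norm_add_mul_I_add (by linarith) t _)) ?_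
  rw [mul_comm (∏ j ∈ range (n + 1), (x + (j : ℝ)))]
  exact prod_norm_add_mul_I_add_le hx t _

theorem norm_Gamma_le {x : ℝ} (hx : 0 < x) (t : ℝ) : ‖Gamma (x + t * I)‖ ≤ Real.Gamma x :=
  le_of_tendsto_of_tendsto (GammaSeq_tendsto_Gamma _).norm (Real.GammaSeq_tendsto_Gamma x) <|
    (eventually_ne_atTop 0).mono fun _ hn => norm_GammaSeq_le hx t hn

theorem exp_mul_Gamma_le_norm_Gamma {x : ℝ} (hx : 1 / 2 < x) (t : ℝ) :
    Real.exp (-(t ^ 2 / (2 * x - 1))) * Real.Gamma x ≤ ‖Gamma (x + t * I)‖ :=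
  le_of_tendsto_of_tendsto ((Real.GammaSeq_tendsto_Gamma x).const_mul _)
    (GammaSeq_tendsto_Gamma _).norm <| (eventually_ne_atTop 0).mono fun _ hn =>
      exp_mul_GammaSeq_le_norm_GammaSeq hx t hn

theorem norm_Gamma_ofReal_sub_mul_I (x t : ℝ) : ‖Gamma (x - t * I)‖ = ‖Gamma (x + t * I)‖ := by
  rw [← norm_conj (Gamma _), ← Gamma_conj]
  simp [sub_eq_add_neg]

end Complex

namespace Real

theorem Gamma_add_le_Gamma_mul_rpow {y a : ℝ} (hy : 0 < y) (ha₀ : 0 < a) (ha₁ : a < 1) :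
    Gamma (y + a) ≤ Gamma y * y ^ a := by
  have h := Gamma_mul_add_mul_le_rpow_Gamma_mul_rpow_Gamma (s := y) (t := y + 1)
    hy (by linarith) (sub_pos.2 ha₁) ha₀ (sub_add_cancel 1 a)
  rwa [show (1 - a) * y + a * (y + 1) = y + a by ring, Gamma_add_one hy.ne', mul_rpow hy.le
    (Gamma_pos_of_pos hy).le, mul_left_comm, ← rpow_add (Gamma_pos_of_pos hy), sub_add_cancel,
    rpow_one, mul_comm] at h

theorem Gamma_add_one_sub_le_Gamma_mul_rpow {y a : ℝ} (hy : 0 < y) (ha₀ : 0 < a) (ha₁ : a < 1) :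
    Gamma (y + 1 - a) ≤ Gamma (y + 1) * y ^ (-a) := by
  have h := Gamma_add_le_Gamma_mul_rpow hy (sub_pos.2 ha₁) (by linarith : 1 - a < 1)
  rwa [← add_sub_assoc, rpow_sub hy, rpow_one, ← mul_div_assoc, mul_comm (Gamma y),
    ← Gamma_add_one hy.ne', div_eq_mul_inv, ← rpow_neg hy.le] at h

end Real

theorem div_sub_mul_div_sub_one_le {x a b : ℝ} (ha : 0 ≤ a) (hb : 0 ≤ b) (hx : 2 * (a + 1) ≤ x) :
    x / (x - a) * ((x + b) / (x - 1)) ≤ 1 + 4 * (a + b + 1) / x := by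
  have hx₀ : 0 < x := by linarith
  have hq : 4 * (a + b + 1) / x * x = 4 * (a + b + 1) := div_mul_cancel₀ _ hx₀.ne'
  have hq₀ : 0 ≤ 4 * (a + b + 1) / x := by positivity
  have hden : x ^ 2 / 4 ≤ (x - a) * (x - 1) := by nlinarith
  rw [div_mul_div_comm, div_le_iff₀ (by nlinarith)]
  nlinarith [mul_le_mul_of_nonneg_left hden hq₀]

section GammaRatio

variable {x δ : ℝ} (t : ℝ)

theorem exp_neg_le_norm_Gamma_div_mul_rpow (hx : 1 ≤ x) (hδ₀ : 0 < δ) (hδ₁ : δ < 1 / 2) :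
    Real.exp (-(t ^ 2 / (2 * (x - δ) - 1))) ≤
      ‖Gamma (((x - δ : ℝ) : ℂ) + t * I) / Gamma (((x + δ : ℝ) : ℂ) - t * I)‖ *
        ‖(x : ℂ) + t * I‖ ^ (2 * δ) := by
  set r := ‖(x : ℂ) + t * I‖
  have hN := exp_mul_Gamma_le_norm_Gamma (x := x - δ) (by linarith) t
  have hD := norm_Gamma_ofReal_sub_mul_I (x + δ) t ▸ norm_Gamma_le (x := x + δ) (by linarith) t
  have hD₀ : 0 < ‖Gamma (((x + δ : ℝ) : ℂ) - t * I)‖ := by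
    rw [norm_Gamma_ofReal_sub_mul_I]
    exact (mul_pos (Real.exp_pos _) (Real.Gamma_pos_of_pos (by linarith))).trans_le
      (exp_mul_Gamma_le_norm_Gamma (by linarith) t)
  have hW : Real.Gamma (x + δ) ≤ Real.Gamma (x - δ) * (x - δ) ^ (2 * δ) := by
    have h := Real.Gamma_add_le_Gamma_mul_rpow (y := x - δ) (a := 2 * δ) (by linarith)
      (by linarith) (by linarith)
    rwa [show x - δ + 2 * δ = x + δ by ring] at h
  have hr : (x - δ) ^ (2 * δ) ≤ r ^ (2 * δ) :=
    Real.rpow_le_rpow (by linarith) ((sub_le_self x hδ₀.le).trans (le_norm_ofReal_add_mul_I x t))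
      (by linarith)
  rw [norm_div, div_mul_eq_mul_div, le_div_iff₀ hD₀]
  calc Real.exp (-(t ^ 2 / (2 * (x - δ) - 1))) * ‖Gamma (((x + δ : ℝ) : ℂ) - t * I)‖
      ≤ Real.exp (-(t ^ 2 / (2 * (x - δ) - 1))) * (Real.Gamma (x - δ) * r ^ (2 * δ)) := by
        gcongr
        exact hD.trans (hW.trans (by gcongr; exact (Real.Gamma_pos_of_pos (by linarith)).le))
    _ ≤ ‖Gamma (((x - δ : ℝ) : ℂ) + t * I)‖ * r ^ (2 * δ) := by
        rw [← mul_assoc]; gcongr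

theorem norm_Gamma_div_mul_rpow_le (hx : 1 ≤ x) (hδ₀ : 0 < δ) (hδ₁ : δ < 1 / 2) :
    ‖Gamma (((x - δ : ℝ) : ℂ) + t * I) / Gamma (((x + δ : ℝ) : ℂ) - t * I)‖ *
        ‖(x : ℂ) + t * I‖ ^ (2 * δ) ≤
      Real.exp (t ^ 2 / (2 * (x + δ) - 1)) * (‖(x : ℂ) + t * I‖ / (x + δ - 1)) := by
  set r := ‖(x : ℂ) + t * I‖
  have hN := norm_Gamma_le (x := x - δ) (by linarith) t
  have hD := norm_Gamma_ofReal_sub_mul_I (x + δ) t ▸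
    exp_mul_Gamma_le_norm_Gamma (x := x + δ) (by linarith) t
  have hD₀ : 0 < ‖Gamma (((x + δ : ℝ) : ℂ) - t * I)‖ :=
    (mul_pos (Real.exp_pos _) (Real.Gamma_pos_of_pos (by linarith))).trans_le hD
  have hW : Real.Gamma (x - δ) ≤ Real.Gamma (x + δ) * (x + δ - 1) ^ (-(2 * δ)) := by
    have h := Real.Gamma_add_one_sub_le_Gamma_mul_rpow (y := x + δ - 1) (a := 2 * δ)
      (by linarith) (by linarith) (by linarith)
    rwa [sub_add_cancel, show x + δ - 2 * δ = x - δ by ring] at h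
  have hr : 1 ≤ r / (x + δ - 1) :=
    (one_le_div (by linarith)).2
      ((by linarith : x + δ - 1 ≤ x).trans (le_norm_ofReal_add_mul_I x t))
  have hΓ : Real.Gamma (x + δ) ≤
      Real.exp (t ^ 2 / (2 * (x + δ) - 1)) * ‖Gamma (((x + δ : ℝ) : ℂ) - t * I)‖ := by
    rwa [Real.exp_neg, inv_mul_le_iff₀ (Real.exp_pos _)] at hD
  have hb : 0 < x + δ - 1 := by linarith
  calc ‖Gamma (((x - δ : ℝ) : ℂ) + t * I) / Gamma (((x + δ : ℝ) : ℂ) - t * I)‖ * r ^ (2 * δ)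
      ≤ Real.exp (t ^ 2 / (2 * (x + δ) - 1)) * (x + δ - 1) ^ (-(2 * δ)) * r ^ (2 * δ) := by
        gcongr
        rw [norm_div, div_le_iff₀ hD₀, mul_right_comm]
        exact hN.trans (hW.trans (by gcongr))
    _ = Real.exp (t ^ 2 / (2 * (x + δ) - 1)) * (r / (x + δ - 1)) ^ (2 * δ) := by
        rw [Real.div_rpow (norm_nonneg _) hb.le, Real.rpow_neg hb.le]
        ring
    _ ≤ Real.exp (t ^ 2 / (2 * (x + δ) - 1)) * (r / (x + δ - 1)) := by
        gcongr
        exact Real.rpow_le_self_of_one_le hr (by linarith)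

theorem abs_norm_Gamma_div_mul_rpow_sub_one_le (hx : 2 * (t ^ 2 + 1) ≤ x) (hδ₀ : 0 < δ)
    (hδ₁ : δ < 1 / 2) :
    |‖Gamma (((x - δ : ℝ) : ℂ) + t * I) / Gamma (((x + δ : ℝ) : ℂ) - t * I)‖ *
        ‖(x : ℂ) + t * I‖ ^ (2 * δ) - 1| ≤ 8 * (t ^ 2 + |t| + 1) / ‖(x : ℂ) + t * I‖ := by
  set r := ‖(x : ℂ) + t * I‖
  have hx₂ : 2 ≤ x := by nlinarith
  have hx₀ : 0 < x := by linarith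
  have htx : t ^ 2 / x < 1 := (div_lt_one hx₀).2 (by nlinarith)
  have hrx : x ≤ r := le_norm_ofReal_add_mul_I x t
  have hrt : r ≤ x + |t| := by
    simpa [abs_of_pos hx₀] using norm_le_abs_re_add_abs_im ((x : ℂ) + t * I)
  have hlower : 1 - t ^ 2 / x ≤ Real.exp (-(t ^ 2 / (2 * (x - δ) - 1))) :=
    le_trans (by gcongr; linarith) (Real.one_sub_le_exp_neg _)
  have hexp : Real.exp (t ^ 2 / (2 * (x + δ) - 1)) ≤ x / (x - t ^ 2) := by
    have hv : t ^ 2 / (2 * (x + δ) - 1) ≤ t ^ 2 / x := by gcongr; linarith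
    calc Real.exp (t ^ 2 / (2 * (x + δ) - 1))
        ≤ 1 / (1 - t ^ 2 / (2 * (x + δ) - 1)) :=
          Real.exp_bound_div_one_sub_of_interval (div_nonneg (sq_nonneg t) (by linarith))
            (hv.trans_lt htx)
      _ ≤ 1 / (1 - t ^ 2 / x) := by gcongr
      _ = x / (x - t ^ 2) := by rw [one_sub_div hx₀.ne', one_div_div]
  have hratio : r / (x + δ - 1) ≤ (x + |t|) / (x - 1) :=
    div_le_div₀ (by positivity) hrt (by nlinarith) (by linarith)
  have hupper := (norm_Gamma_div_mul_rpow_le t (by linarith) hδ₀ hδ₁).trans <|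
    (mul_le_mul hexp hratio (div_nonneg (norm_nonneg _) (by linarith))
      (div_nonneg hx₀.le (by nlinarith))).trans <|
      div_sub_mul_div_sub_one_le (sq_nonneg t) (abs_nonneg t) hx
  have hscale : 4 * (t ^ 2 + |t| + 1) / x ≤ 8 * (t ^ 2 + |t| + 1) / r := by
    rw [div_le_div_iff₀ hx₀ (hx₀.trans_le hrx)]
    nlinarith [sq_abs t, abs_nonneg t]
  rw [abs_sub_le_iff]
  constructor
  · linarith
  · have ht : t ^ 2 / x ≤ 4 * (t ^ 2 + |t| + 1) / x := by
      gcongr; linarith [abs_nonneg t, sq_nonneg t]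
    linarith [exp_neg_le_norm_Gamma_div_mul_rpow t (x := x) (by linarith) hδ₀ hδ₁]

end GammaRatio

theorem rpow_neg_mul_norm_one_add_mul_rpow_sub_one {r y : ℝ} (hr : 0 < r) (hy : 0 ≤ y) (a : ℝ) :
    r ^ (-a) * ‖1 + ((y * r ^ a - 1 : ℝ) : ℂ)‖ = y := by
  rw [show (1 : ℂ) + ((y * r ^ a - 1 : ℝ) : ℂ) = ((y * r ^ a : ℝ) : ℂ) by push_cast; ring,
    norm_real, Real.norm_of_nonneg (by positivity), Real.rpow_neg hr.le, mul_comm y,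
    inv_mul_cancel_left₀ (Real.rpow_pos_of_pos hr a).ne']

theorem rpow_neg_mul_norm_one_add_le {x t δ ε C : ℝ} {E : ℂ} (hx : 1 ≤ x) (hε : 0 ≤ ε)
    (hεδ : ε ≤ δ) (hC : 0 ≤ C) (hE : ‖E‖ ≤ C / ‖(x : ℂ) + t * I‖) :
    ‖(x : ℂ) + t * I‖ ^ (-(2 * δ)) * ‖1 + E‖ ≤ (1 + C) * x ^ (-(2 * ε)) := by
  have hr := le_norm_ofReal_add_mul_I x t
  have hr₁ : 1 ≤ ‖(x : ℂ) + t * I‖ := hx.trans hr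
  calc ‖(x : ℂ) + t * I‖ ^ (-(2 * δ)) * ‖1 + E‖
      ≤ x ^ (-(2 * ε)) * (1 + C) := by
        gcongr
        · calc ‖(x : ℂ) + t * I‖ ^ (-(2 * δ)) ≤ ‖(x : ℂ) + t * I‖ ^ (-(2 * ε)) :=
                Real.rpow_le_rpow_of_exponent_le hr₁ (by linarith)
            _ ≤ x ^ (-(2 * ε)) := Real.rpow_le_rpow_of_nonpos (by linarith) hr (by linarith)
        · calc ‖1 + E‖ ≤ 1 + ‖E‖ := by simpa using norm_add_le 1 E
            _ ≤ 1 + C := by gcongr; exact hE.trans (div_le_self hC hr₁)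
    _ = (1 + C) * x ^ (-(2 * ε)) := mul_comm _ _

theorem exists_norm_Gamma_div_eq_rpow_neg_mul_norm_one_add (t : ℝ) :
    ∃ C > (0 : ℝ), ∃ X : ℝ, ∀ x : ℝ, X ≤ x → ∀ δ : ℝ, 0 < δ → δ < 1 / 2 →
      ∃ E : ℂ, ‖E‖ ≤ C / ‖(x : ℂ) + t * I‖ ∧
        ‖Gamma (((x - δ : ℝ) : ℂ) + t * I) / Gamma (((x + δ : ℝ) : ℂ) - t * I)‖ =
          ‖(x : ℂ) + t * I‖ ^ (-(2 * δ)) * ‖1 + E‖ := by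
  refine ⟨8 * (t ^ 2 + |t| + 1), by positivity, 2 * (t ^ 2 + 1), fun x hx δ hδ₀ hδ₁ => ?_⟩
  have hr : 0 < ‖(x : ℂ) + t * I‖ :=
    lt_of_lt_of_le (by nlinarith) (le_norm_ofReal_add_mul_I x t)
  refine ⟨_, ?_, (rpow_neg_mul_norm_one_add_mul_rpow_sub_one hr (norm_nonneg _) _).symm⟩
  rw [norm_real, Real.norm_eq_abs]
  exact abs_norm_Gamma_div_mul_rpow_sub_one_le t hx hδ₀ hδ₁

theorem exists_norm_Gamma_div_lt (t : ℝ) {ε ε' : ℝ} (hε : 0 < ε) (hε' : 0 < ε') :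
    ∃ X : ℝ, ∀ x : ℝ, X ≤ x → ∀ δ : ℝ, ε ≤ δ → δ < 1 / 2 →
      ‖Gamma (((x - δ : ℝ) : ℂ) + t * I) / Gamma (((x + δ : ℝ) : ℂ) - t * I)‖ < ε' := by
  obtain ⟨C, hC, X, hX⟩ := exists_norm_Gamma_div_eq_rpow_neg_mul_norm_one_add t
  have hdecay : Tendsto (fun x : ℝ => (1 + C) * x ^ (-(2 * ε))) atTop (𝓝 0) := by
    simpa using (tendsto_rpow_neg_atTop (by positivity)).const_mul (1 + C)
  obtain ⟨X', hX'⟩ := eventually_atTop.1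
    ((hdecay.eventually_lt_const hε').and (eventually_ge_atTop (max X 1)))
  refine ⟨X', fun x hx δ hεδ hδ => ?_⟩
  obtain ⟨hlt, hx'⟩ := hX' x hx
  obtain ⟨E, hE, heq⟩ := hX x (le_of_max_le_left hx') δ (hε.trans_le hεδ) hδ
  rw [heq]
  exact (rpow_neg_mul_norm_one_add_le (le_of_max_le_right hx') hε.le hεδ hC.le hE).trans_lt hlt

theorem Gamma_ratio_abs_estimate_general (t₀ : ℝ) (ε : ℝ) (hε : 0 < ε) :
    (∃ C > (0 : ℝ), ∃ K : ℝ, ∀ k : ℝ, K ≤ k → ∀ δ : ℝ, ε < δ → δ < 1 / 2 →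
      ∃ E : ℂ, ‖E‖ ≤ C / ‖((k / 2 : ℝ) : ℂ) + (t₀ : ℂ) * I‖ ∧
        ‖Complex.Gamma (((k / 2 - δ : ℝ) : ℂ) + (t₀ : ℂ) * I) /
            Complex.Gamma (((k / 2 + δ : ℝ) : ℂ) - (t₀ : ℂ) * I)‖ =
          ‖((k / 2 : ℝ) : ℂ) + (t₀ : ℂ) * I‖ ^ (-(2 * δ)) * ‖1 + E‖) ∧
    (∀ ε' > (0 : ℝ), ∃ K' : ℝ, ∀ k : ℝ, K' ≤ k → ∀ δ : ℝ, ε < δ → δ < 1 / 2 →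
      ‖Complex.Gamma (((k / 2 - δ : ℝ) : ℂ) + (t₀ : ℂ) * I) /
          Complex.Gamma (((k / 2 + δ : ℝ) : ℂ) - (t₀ : ℂ) * I)‖ < ε') := by
  obtain ⟨C, hC, X, hX⟩ := exists_norm_Gamma_div_eq_rpow_neg_mul_norm_one_add t₀
  refine ⟨⟨C, hC, 2 * X, fun k hk δ hεδ hδ => hX (k / 2) (by linarith) δ (hε.trans hεδ) hδ⟩,
    fun ε' hε' => ?_⟩
  obtain ⟨X', hX'⟩ := exists_norm_Gamma_div_lt t₀ hε hε'
  exact ⟨2 * X', fun k hk δ hεδ hδ => hX' (k / 2) (by linarith) δ hεδ.le hδ⟩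

/-- Fix `t₀ ∈ ℝ` and `ε ∈ (0, 1/2)`.  For `s = k/2 − δ + it₀` with `ε < δ < 1/2`,
`|Γ(s)/Γ(k−s)| = |k/2 + it₀|^{−2δ} · |1 + O(1/|k/2 + it₀|)|` as `k → ∞`, with an
absolute implied constant, uniformly in `δ`; in particular `|Γ(s)/Γ(k−s)| → 0`
uniformly in `δ`. -/
theorem Gamma_ratio_abs_estimate (t₀ : ℝ) (ε : ℝ) (hε : 0 < ε) (hε' : ε < 1 / 2) :
    (∃ C > (0 : ℝ), ∃ K : ℝ, ∀ k : ℝ, K ≤ k → ∀ δ : ℝ, ε < δ → δ < 1 / 2 →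
      ∃ E : ℂ, ‖E‖ ≤ C / ‖((k / 2 : ℝ) : ℂ) + (t₀ : ℂ) * I‖ ∧
        ‖Complex.Gamma (((k / 2 - δ : ℝ) : ℂ) + (t₀ : ℂ) * I) /
            Complex.Gamma (((k / 2 + δ : ℝ) : ℂ) - (t₀ : ℂ) * I)‖ =
          ‖((k / 2 : ℝ) : ℂ) + (t₀ : ℂ) * I‖ ^ (-(2 * δ)) * ‖1 + E‖) ∧
    (∀ ε' > (0 : ℝ), ∃ K' : ℝ, ∀ k : ℝ, K' ≤ k → ∀ δ : ℝ, ε < δ → δ < 1 / 2 →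
      ‖Complex.Gamma (((k / 2 - δ : ℝ) : ℂ) + (t₀ : ℂ) * I) /
          Complex.Gamma (((k / 2 + δ : ℝ) : ℂ) - (t₀ : ℂ) * I)‖ < ε') :=
  Gamma_ratio_abs_estimate_general t₀ ε hε
end
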